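/- arXiv:1003.2257 — 6 statements merged into one kernel-verified Lean document; each statement's English description precedes it below -/
import Mathlib

section
/- Let f be a probability density function on (0,∞) with cumulative distribution function F, and suppose sup_{y>0} |f'(y)| ≤ μ for some μ > 0. Fix a > 0, r > 1, an integer N ≥ 3, and let y_n = a·r^{n−1} for 1 ≤ n ≤ N be a geometric quantization codebook. Define 𝒫(y_1,...,y_N) = Σ_{n=1}^{N} (F(y_{n+1}) − F(y_n))/y_n with y_{N+1} = ∞. Then for every n with 2 ≤ n ≤ N−1, the partial derivative satisfies ∂𝒫/∂y_n = (1/y_n²)·[f(y_n)·(y_{n+1} − y_n) − ∫_{y_n}^{y_{n+1}} f(y) dy], and consequently |∂𝒫/∂y_n| ≤ (1/2)·μ·(r − 1)². -/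
/-!
Only the terms of `𝒫` with index `n - 1` and `n` depend on `y n`, and for a geometric codebook
`1 / y (n - 1) - 1 / y n = (y (n + 1) - y n) / y n ^ 2`; together with `F y' - F y = ∫ f` this
gives the formula. The bracket is the error of the left-endpoint rectangle rule for `∫ f` over
`[y n, y (n + 1)]`, at most `μ (y (n + 1) - y n) ^ 2 / 2` because `f` is `μ`-Lipschitz, and
`(y (n + 1) - y n) / y n = r - 1`.
-/

open MeasureTheory Set

theorem abs_mul_sub_integral_le_of_abs_deriv_le {f f' : ℝ → ℝ} {b c μ : ℝ} (hbc : b ≤ c)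
    (hf : ∀ x ∈ Icc b c, HasDerivAt f (f' x) x) (hf' : ∀ x ∈ Icc b c, |f' x| ≤ μ) :
    |f b * (c - b) - ∫ t in b..c, f t| ≤ μ * (c - b) ^ 2 / 2 := by
  have hcont : ContinuousOn f (uIcc b c) := by
    rw [uIcc_of_le hbc]
    exact fun x hx => (hf x hx).continuousAt.continuousWithinAt
  have hlip : ∀ t ∈ Icc b c, |f b - f t| ≤ μ * (t - b) := by
    intro t ht
    have h := (convex_Icc b c).norm_image_sub_le_of_norm_hasDerivWithin_le
      (fun x hx => (hf x hx).hasDerivWithinAt) (fun x hx => (hf' x hx).trans_eq' (Real.norm_eq_abs _))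
      (left_mem_Icc.2 hbc) ht
    rwa [Real.norm_eq_abs, Real.norm_eq_abs, abs_sub_comm, abs_of_nonneg (sub_nonneg.2 ht.1)] at h
  calc |f b * (c - b) - ∫ t in b..c, f t| = |∫ t in b..c, (f b - f t)| := by
        rw [intervalIntegral.integral_sub intervalIntegrable_const hcont.intervalIntegrable,
          intervalIntegral.integral_const, smul_eq_mul, mul_comm]
    _ ≤ ∫ t in b..c, |f b - f t| := intervalIntegral.abs_integral_le_integral_abs hbc
    _ ≤ ∫ t in b..c, μ * (t - b) :=
        intervalIntegral.integral_mono_on hbc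
          (continuousOn_const.sub hcont).abs.intervalIntegrable
          ((by fun_prop : Continuous fun t : ℝ => μ * (t - b)).intervalIntegrable _ _) hlip
    _ = μ * (c - b) ^ 2 / 2 := by
        simp only [intervalIntegral.integral_const_mul, intervalIntegral.integral_comp_sub_right
          (fun t => t), integral_id]
        ring

/-- `𝒫(y 1, …, y N)`; the convention `y (N + 1) = ∞` is encoded by `F (y (N + 1)) = 1`. -/
noncomputable def avgPower (F : ℝ → ℝ) (N : ℕ) (y : ℕ → ℝ) : ℝ :=
  ∑ k ∈ Finset.Icc 1 N, ((if k = N then 1 else F (y (k + 1))) - F (y k)) / y k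

theorem hasDerivAt_avgPower_update {F f : ℝ → ℝ} {y : ℕ → ℝ} {N n : ℕ} (hn : 2 ≤ n) (hnN : n < N)
    (hy : y n ≠ 0) (hF : HasDerivAt F (f (y n)) (y n)) :
    HasDerivAt (fun t => avgPower F N (Function.update y n t))
      (f (y n) * (1 / y (n - 1) - 1 / y n) - (F (y (n + 1)) - F (y n)) / y n ^ 2) (y n) := by
  set A := f (y n) / y (n - 1) with hA
  set B := (-f (y n) * y n - (F (y (n + 1)) - F (y n))) / y n ^ 2 with hB
  have hsum : ∑ k ∈ Finset.Icc 1 N, ((if k = n - 1 then A else 0) + if k = n then B else 0)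
      = A + B := by
    rw [Finset.sum_add_distrib, Finset.sum_ite_eq', Finset.sum_ite_eq',
      if_pos (Finset.mem_Icc.2 ⟨by omega, by omega⟩), if_pos (Finset.mem_Icc.2 ⟨by omega, by omega⟩)]
  have hAB : A + B = f (y n) * (1 / y (n - 1) - 1 / y n) - (F (y (n + 1)) - F (y n)) / y n ^ 2 := by
    rw [hA, hB]
    field_simp
    ring
  rw [← hAB, ← hsum]
  refine HasDerivAt.fun_sum fun k _ => ?_
  simp only [Function.update_apply]
  by_cases hk : k = n - 1
  · subst hk
    simp only [if_neg (show n - 1 ≠ N by omega), if_neg (show n - 1 ≠ n by omega),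
      show n - 1 + 1 = n by omega, if_true, add_zero]
    exact (hF.sub_const _).div_const _
  by_cases hkn : k = n
  · subst hkn
    simp only [if_neg (show k ≠ N by omega), if_neg (show k + 1 ≠ k by omega), if_neg hk,
      if_true, zero_add]
    refine (((hasDerivAt_const (y k) (F (y (k + 1)))).fun_sub hF).fun_div
      (hasDerivAt_id' (y k)) hy).congr_deriv ?_
    rw [hB]
    ring
  · simp only [if_neg hk, if_neg hkn, if_neg (show k + 1 ≠ n by omega), add_zero]
    exact hasDerivAt_const _ _

theorem hasDerivAt_avgPower_update_geometric {F f : ℝ → ℝ} {a r : ℝ} {N n : ℕ} (ha : 0 < a)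
    (hr : 0 < r) (hn : 2 ≤ n) (hnN : n < N)
    (hF : HasDerivAt F (f (a * r ^ (n - 1))) (a * r ^ (n - 1))) :
    HasDerivAt (fun t => avgPower F N (Function.update (fun k => a * r ^ (k - 1)) n t))
      (1 / (a * r ^ (n - 1)) ^ 2 * (f (a * r ^ (n - 1)) * (a * r ^ n - a * r ^ (n - 1)) -
        (F (a * r ^ n) - F (a * r ^ (n - 1))))) (a * r ^ (n - 1)) := by
  refine (hasDerivAt_avgPower_update hn hnN (by positivity) hF).congr_deriv ?_
  have hprev : a * r ^ (n - 1) = r * (a * r ^ (n - 1 - 1)) := by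
    rw [mul_left_comm, ← pow_succ', Nat.sub_add_cancel (by omega)]
  have hnext : a * r ^ n = r * (a * r ^ (n - 1)) := by
    rw [mul_left_comm, ← pow_succ', Nat.sub_add_cancel (by omega)]
  simp only [Nat.add_sub_cancel]
  rw [hnext, hprev]
  field_simp

theorem stmt1_general
    (f f' F : ℝ → ℝ) (μ : ℝ)
    (hfder : ∀ x ∈ Ioi (0:ℝ), HasDerivAt f (f' x) x)
    (hf'bd : ∀ x ∈ Ioi (0:ℝ), |f' x| ≤ μ)
    (hF' : ∀ x ∈ Ioi (0:ℝ), HasDerivAt F (f x) x)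
    (a r : ℝ) (ha : 0 < a) (hr : 1 < r)
    (N : ℕ)
    (n : ℕ) (hn2 : 2 ≤ n) (hnN : n ≤ N - 1) :
    HasDerivAt
      (fun t : ℝ =>
        ∑ k ∈ Finset.Icc 1 N,
          ((if k = N then (1:ℝ) else F (if k + 1 = n then t else a * r ^ k)) -
              F (if k = n then t else a * r ^ (k - 1))) /
            (if k = n then t else a * r ^ (k - 1)))
      (1 / (a * r ^ (n - 1)) ^ 2 *
        (f (a * r ^ (n - 1)) * (a * r ^ n - a * r ^ (n - 1)) -
          ∫ t in (a * r ^ (n - 1))..(a * r ^ n), f t))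
      (a * r ^ (n - 1)) ∧
    |1 / (a * r ^ (n - 1)) ^ 2 *
        (f (a * r ^ (n - 1)) * (a * r ^ n - a * r ^ (n - 1)) -
          ∫ t in (a * r ^ (n - 1))..(a * r ^ n), f t)| ≤
      1 / 2 * μ * (r - 1) ^ 2 := by
  have hb : 0 < a * r ^ (n - 1) := by positivity
  have hderiv := hasDerivAt_avgPower_update_geometric (f := f) (N := N) ha (by positivity) hn2
    (by omega) (hF' _ hb)
  have hnext : a * r ^ n = r * (a * r ^ (n - 1)) := by
    rw [mul_left_comm, ← pow_succ', Nat.sub_add_cancel (by omega)]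
  set b := a * r ^ (n - 1)
  set c := a * r ^ n
  have hbc : b ≤ c := by rw [hnext]; nlinarith
  have hIcc : Icc b c ⊆ Ioi 0 := fun x hx => hb.trans_le hx.1
  have hFTC : ∫ t in b..c, f t = F c - F b :=
    intervalIntegral.integral_eq_sub_of_hasDerivAt (fun x hx => hF' x (hIcc (uIcc_of_le hbc ▸ hx)))
      (ContinuousOn.intervalIntegrable fun x hx =>
        (hfder x (hIcc (uIcc_of_le hbc ▸ hx))).continuousAt.continuousWithinAt)
  refine ⟨?_, ?_⟩
  · rw [hFTC]
    convert hderiv using 2 with t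
    simp [avgPower, Function.update_apply]
  · calc _ = 1 / b ^ 2 * |f b * (c - b) - ∫ t in b..c, f t| := by
          rw [abs_mul, abs_of_pos (by positivity)]
      _ ≤ 1 / b ^ 2 * (μ * (c - b) ^ 2 / 2) := by
          gcongr
          exact abs_mul_sub_integral_le_of_abs_deriv_le hbc (fun x hx => hfder x (hIcc hx))
            (fun x hx => hf'bd x (hIcc hx))
      _ = 1 / 2 * μ * (r - 1) ^ 2 := by
          rw [hnext]
          field_simp

/-- for a geometric codebook `y k = a * r ^ (k-1)`, the partial
derivative of the normalized average power with respect to `y n`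
(for `2 ≤ n ≤ N-1`) equals
`(1/y_n²)·[f(y_n)·(y_{n+1} − y_n) − ∫_{y_n}^{y_{n+1}} f]`, and is bounded in
absolute value by `(1/2)·μ·(r−1)²`. -/
theorem stmt1
    (f f' F : ℝ → ℝ) (μ : ℝ) (hμ : 0 < μ)
    (hfnn : ∀ x ∈ Ioi (0:ℝ), 0 ≤ f x)
    (hfder : ∀ x ∈ Ioi (0:ℝ), HasDerivAt f (f' x) x)
    (hf'bd : ∀ x ∈ Ioi (0:ℝ), |f' x| ≤ μ)
    (hfint : IntegrableOn f (Ioi 0))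
    (hfone : ∫ x in Ioi (0:ℝ), f x = 1)
    (hF : ∀ x, F x = ∫ t in Ioc (0:ℝ) x, f t)
    (hF' : ∀ x ∈ Ioi (0:ℝ), HasDerivAt F (f x) x)
    (a r : ℝ) (ha : 0 < a) (hr : 1 < r)
    (N : ℕ) (hN : 3 ≤ N)
    (n : ℕ) (hn2 : 2 ≤ n) (hnN : n ≤ N - 1) :
    HasDerivAt
      (fun t : ℝ =>
        ∑ k ∈ Finset.Icc 1 N,
          ((if k = N then (1:ℝ) else F (if k + 1 = n then t else a * r ^ k)) -
              F (if k = n then t else a * r ^ (k - 1))) /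
            (if k = n then t else a * r ^ (k - 1)))
      (1 / (a * r ^ (n - 1)) ^ 2 *
        (f (a * r ^ (n - 1)) * (a * r ^ n - a * r ^ (n - 1)) -
          ∫ t in (a * r ^ (n - 1))..(a * r ^ n), f t))
      (a * r ^ (n - 1)) ∧
    |1 / (a * r ^ (n - 1)) ^ 2 *
        (f (a * r ^ (n - 1)) * (a * r ^ n - a * r ^ (n - 1)) -
          ∫ t in (a * r ^ (n - 1))..(a * r ^ n), f t)| ≤
      1 / 2 * μ * (r - 1) ^ 2 :=
  stmt1_general f f' F μ hfder hf'bd hF' a r ha hr N n hn2 hnN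
end

section
/- (Lemma 1) Let f be a positive differentiable probability density function on (0,∞) with cumulative distribution function F and with sup_{y>0} |f'(y)| ≤ μ for some μ > 0. Fix a > 0, r > 1, an integer N ≥ 3, and the geometric codebook y_n = a·r^{n−1}, 1 ≤ n ≤ N. Define 𝒫 = Σ_{n=1}^{N} (F(y_{n+1}) − F(y_n))/y_n with y_{N+1} = ∞, regarded as a function of y_2,...,y_N with y_1 = a fixed. Then the Euclidean norm of the gradient satisfies ‖∇𝒫‖ = (Σ_{n=2}^{N} (∂𝒫/∂y_n)²)^{1/2} ≤ (1/2)·μ·√N·(r − 1)² + D, where D = |(1/y²)·((r − 1)·y·f(y) − ∫_y^∞ f(t) dt)| evaluated at y = a·r^{N−1}. -/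
open MeasureTheory Set

/-- The geometric (uniform in dB) quantization levels `y n = a * r^(n-1)`. -/
noncomputable def quantLevels (a r : ℝ) (n : ℕ) : ℝ := a * r ^ (n - 1)

/-- The normalized average power `𝒫` regarded as a function of the single level
`y n` (substituted by `t`), with the other levels `y k` fixed and `F (y (N+1)) = 1`. -/
noncomputable def avgPowerFun (F : ℝ → ℝ) (N : ℕ) (y : ℕ → ℝ) (n : ℕ) (t : ℝ) : ℝ :=
  ∑ k ∈ Finset.Icc 1 N,
    ((if k = N then (1:ℝ) else F (if k + 1 = n then t else y (k + 1))) -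
        F (if k = n then t else y k)) /
      (if k = n then t else y k)

/-- Euclidean norm of the gradient of `𝒫` with respect to `y 2, …, y N`
(`y 1` being fixed). -/
noncomputable def gradNormP (F : ℝ → ℝ) (N : ℕ) (y : ℕ → ℝ) : ℝ :=
  Real.sqrt (∑ n ∈ Finset.Icc 2 N, (deriv (avgPowerFun F N y n) (y n)) ^ 2)

/-! Since `y (n - 1) = y n / r`, for `n < N` the partial derivative `∂𝒫/∂y n` equals
`((y (n+1) - y n) f (y n) - ∫_{y n}^{y (n+1)} f) / (y n)²`, the error of the left-endpoint rule
for `∫ f` over `[y n, r y n]`. As `f` is `μ`-Lipschitz this error is at most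
`μ ((r - 1) y n)² / 2`, so each such partial derivative is bounded by `μ (r - 1)² / 2`
independently of `n`. The last partial derivative is exactly the quantity inside `D`, and
`√(s + t) ≤ √s + √t` separates it from the others. -/

lemma Real.sqrt_add_le_add_sqrt {x y : ℝ} (hx : 0 ≤ x) (hy : 0 ≤ y) : √(x + y) ≤ √x + √y :=
  Real.sqrt_le_iff.mpr ⟨by positivity, by
    nlinarith [Real.sq_sqrt hx, Real.sq_sqrt hy, Real.sqrt_nonneg x, Real.sqrt_nonneg y]⟩

lemma Finset.sqrt_sum_sq_le {ι : Type*} [DecidableEq ι] {s : Finset ι} {m : ι} (hm : m ∈ s)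
    {g : ι → ℝ} {B : ℝ} (hB : 0 ≤ B) (hg : ∀ i ∈ s.erase m, |g i| ≤ B) :
    √(∑ i ∈ s, g i ^ 2) ≤ √((s.erase m).card : ℝ) * B + |g m| := by
  have hsum : ∑ i ∈ s.erase m, g i ^ 2 ≤ (s.erase m).card * B ^ 2 := by
    simpa using Finset.sum_le_card_nsmul _ _ _ fun i hi => sq_le_sq' (abs_le.mp (hg i hi)).1
      (abs_le.mp (hg i hi)).2
  calc √(∑ i ∈ s, g i ^ 2) = √(∑ i ∈ s.erase m, g i ^ 2 + g m ^ 2) := by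
        rw [Finset.sum_erase_add _ _ hm]
    _ ≤ √(∑ i ∈ s.erase m, g i ^ 2) + √(g m ^ 2) :=
        Real.sqrt_add_le_add_sqrt (Finset.sum_nonneg fun _ _ => sq_nonneg _) (sq_nonneg _)
    _ ≤ √((s.erase m).card * B ^ 2) + |g m| := by
        rw [Real.sqrt_sq_eq_abs]; gcongr
    _ = √((s.erase m).card : ℝ) * B + |g m| := by
        rw [Real.sqrt_mul (by positivity), Real.sqrt_sq hB]

lemma abs_integral_sub_mul_le {f : ℝ → ℝ} {μ A B : ℝ} (hAB : A ≤ B)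
    (hf : IntervalIntegrable f volume A B)
    (hlip : ∀ t ∈ Ioc A B, |f t - f A| ≤ μ * (t - A)) :
    |(∫ t in A..B, f t) - (B - A) * f A| ≤ μ * (B - A) ^ 2 / 2 := by
  have hmean : (∫ t in A..B, f t) - (B - A) * f A = ∫ t in A..B, (f t - f A) := by
    rw [intervalIntegral.integral_sub hf intervalIntegrable_const, intervalIntegral.integral_const,
      smul_eq_mul]
  have hlin : ∫ t in A..B, μ * (t - A) = μ * (B - A) ^ 2 / 2 := by
    rw [intervalIntegral.integral_const_mul, intervalIntegral.integral_comp_sub_right (fun t => t),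
      integral_id]
    ring
  rw [hmean, ← hlin]
  exact intervalIntegral.norm_integral_le_of_norm_le (f := fun t => f t - f A) hAB
    (ae_of_all _ hlip) ((by fun_prop : Continuous fun t => μ * (t - A)).intervalIntegrable A B)

lemma cdf_sub_cdf {f F : ℝ → ℝ} (hfint : IntegrableOn f (Ioi 0))
    (hF : ∀ x, F x = ∫ t in Ioc (0:ℝ) x, f t) {A B : ℝ} (hA : 0 ≤ A) (hAB : A ≤ B) :
    F B - F A = ∫ t in A..B, f t := by
  have hint : ∀ x, 0 ≤ x → IntervalIntegrable f volume 0 x := fun x hx =>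
    (intervalIntegrable_iff_integrableOn_Ioc_of_le hx).mpr (hfint.mono_set Ioc_subset_Ioi_self)
  rw [hF, hF, ← intervalIntegral.integral_of_le (hA.trans hAB),
    ← intervalIntegral.integral_of_le hA,
    intervalIntegral.integral_interval_sub_left (hint B (hA.trans hAB)) (hint A hA)]

lemma one_sub_cdf {f F : ℝ → ℝ} (hfint : IntegrableOn f (Ioi 0))
    (hfone : ∫ x in Ioi (0:ℝ), f x = 1) (hF : ∀ x, F x = ∫ t in Ioc (0:ℝ) x, f t) {A : ℝ}
    (hA : 0 ≤ A) :
    1 - F A = ∫ t in Ioi A, f t := by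
  rw [hF, ← hfone, ← intervalIntegral.integral_of_le hA,
    ← intervalIntegral.integral_interval_add_Ioi hfint (hfint.mono_set (Ioi_subset_Ioi hA))]
  ring

lemma abs_mul_sub_cdf_sub_le {f f' F : ℝ → ℝ} {μ : ℝ}
    (hfder : ∀ x ∈ Ioi (0:ℝ), HasDerivAt f (f' x) x) (hf'bd : ∀ x ∈ Ioi (0:ℝ), |f' x| ≤ μ)
    (hfint : IntegrableOn f (Ioi 0)) (hF : ∀ x, F x = ∫ t in Ioc (0:ℝ) x, f t)
    {A B : ℝ} (hA : 0 < A) (hAB : A ≤ B) :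
    |(B - A) * f A - (F B - F A)| ≤ μ * (B - A) ^ 2 / 2 := by
  have hlip : ∀ t ∈ Ioc A B, |f t - f A| ≤ μ * (t - A) := fun t ht => by
    have := (convex_Ioi (0:ℝ)).norm_image_sub_le_of_norm_hasDerivWithin_le
      (fun x hx => (hfder x hx).hasDerivWithinAt) hf'bd (mem_Ioi.mpr hA) (hA.trans ht.1)
    rwa [Real.norm_eq_abs, Real.norm_eq_abs, abs_of_pos (sub_pos.mpr ht.1)] at this
  have hint : IntervalIntegrable f volume A B :=
    (intervalIntegrable_iff_integrableOn_Ioc_of_le hAB).mpr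
      (hfint.mono_set fun t ht => hA.trans ht.1)
  rw [cdf_sub_cdf hfint hF hA.le hAB, abs_sub_comm]
  exact abs_integral_sub_mul_le hAB hint hlip

lemma hasDerivAt_avgPowerFun {F : ℝ → ℝ} {N n : ℕ} {y : ℕ → ℝ} {d : ℝ}
    (hn : 2 ≤ n) (hnN : n ≤ N) (hy : y n ≠ 0) (hF : HasDerivAt F d (y n)) :
    HasDerivAt (avgPowerFun F N y n)
      (d / y (n - 1) - d / y n - ((if n = N then 1 else F (y (n + 1))) - F (y n)) / y n ^ 2)
      (y n) := by
  set c : ℝ := if n = N then 1 else F (y (n + 1))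
  set e : ℝ := -d / y n - (c - F (y n)) / y n ^ 2
  -- only the summands `k = n - 1` and `k = n` depend on `t`
  have hterm : ∀ k ∈ Finset.Icc 1 N, HasDerivAt
      (fun t => ((if k = N then (1:ℝ) else F (if k + 1 = n then t else y (k + 1))) -
        F (if k = n then t else y k)) / (if k = n then t else y k))
      ((if k = n - 1 then d / y (n - 1) else 0) + (if k = n then e else 0)) (y n) := by
    intro k _
    by_cases hkn : k = n
    · subst k
      have hc : ∀ t : ℝ, (if n = N then (1:ℝ) else F (if n + 1 = n then t else y (n + 1))) = c :=
        fun t => by simp [c]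
      simp only [hc, if_true, if_neg (by omega : n ≠ n - 1), zero_add]
      refine ((hF.const_sub c).fun_div (hasDerivAt_id _) hy).congr_deriv ?_
      simp only [e, id]; field_simp
    · by_cases hkn' : k = n - 1
      · subst k
        simp only [if_pos (by omega : n - 1 + 1 = n), if_neg hkn, if_neg (by omega : n - 1 ≠ N),
          if_true, add_zero]
        exact (hF.sub_const _).div_const _
      · simp only [if_neg (by omega : k + 1 ≠ n), if_neg hkn, if_neg hkn', add_zero]
        exact hasDerivAt_const _ _
  refine (HasDerivAt.fun_sum hterm).congr_deriv ?_
  rw [Finset.sum_add_distrib, Finset.sum_ite_eq', Finset.sum_ite_eq',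
    if_pos (Finset.mem_Icc.mpr ⟨by omega, by omega⟩), if_pos (Finset.mem_Icc.mpr ⟨by omega, hnN⟩)]
  simp only [e]; ring

lemma quantLevels_pos {a r : ℝ} (ha : 0 < a) (hr : 0 < r) (n : ℕ) : 0 < quantLevels a r n :=
  mul_pos ha (pow_pos hr _)

lemma quantLevels_succ (a r : ℝ) {n : ℕ} (hn : 1 ≤ n) :
    quantLevels a r (n + 1) = r * quantLevels a r n := by
  obtain ⟨m, rfl⟩ := Nat.exists_eq_add_of_le hn
  simp only [quantLevels, Nat.add_sub_cancel_left, Nat.add_sub_cancel]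
  ring

lemma deriv_avgPowerFun_quantLevels {f F : ℝ → ℝ} (hF' : ∀ x ∈ Ioi (0:ℝ), HasDerivAt F (f x) x)
    {a r : ℝ} (ha : 0 < a) (hr : 0 < r) {N n : ℕ} (hn : 2 ≤ n) (hnN : n ≤ N) :
    deriv (avgPowerFun F N (quantLevels a r) n) (quantLevels a r n) =
      ((r - 1) * quantLevels a r n * f (quantLevels a r n) -
        ((if n = N then 1 else F (quantLevels a r (n + 1))) - F (quantLevels a r n))) /
        quantLevels a r n ^ 2 := by
  have hy := quantLevels_pos ha hr
  rw [(hasDerivAt_avgPowerFun hn hnN (hy n).ne' (hF' _ (hy n))).deriv]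
  have hprev : quantLevels a r n = r * quantLevels a r (n - 1) := by
    rw [← quantLevels_succ a r (by omega : 1 ≤ n - 1), Nat.sub_add_cancel (by omega : 1 ≤ n)]
  have := (hy (n - 1)).ne'
  rw [hprev]
  field_simp

theorem stmt2_general
    (f f' F : ℝ → ℝ) (μ : ℝ)
    (hfder : ∀ x ∈ Ioi (0:ℝ), HasDerivAt f (f' x) x)
    (hf'bd : ∀ x ∈ Ioi (0:ℝ), |f' x| ≤ μ)
    (hfint : IntegrableOn f (Ioi 0))
    (hfone : ∫ x in Ioi (0:ℝ), f x = 1)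
    (hF : ∀ x, F x = ∫ t in Ioc (0:ℝ) x, f t)
    (hF' : ∀ x ∈ Ioi (0:ℝ), HasDerivAt F (f x) x)
    (a r : ℝ) (ha : 0 < a) (hr : 1 < r)
    (N : ℕ) (hN : 3 ≤ N) :
    gradNormP F N (quantLevels a r) ≤
      1 / 2 * μ * Real.sqrt N * (r - 1) ^ 2 +
        |1 / (quantLevels a r N) ^ 2 *
          ((r - 1) * quantLevels a r N * f (quantLevels a r N) -
            ∫ t in Ioi (quantLevels a r N), f t)| := by
  set y := quantLevels a r
  have hy : ∀ n, 0 < y n := quantLevels_pos ha (by linarith)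
  have hμ : 0 ≤ μ := (abs_nonneg _).trans (hf'bd 1 (mem_Ioi.mpr one_pos))
  have hinterior : ∀ n ∈ (Finset.Icc 2 N).erase N,
      |deriv (avgPowerFun F N y n) (y n)| ≤ μ * (r - 1) ^ 2 / 2 := by
    intro n hn
    rw [Finset.mem_erase, Finset.mem_Icc] at hn
    have hsucc : y (n + 1) = r * y n := quantLevels_succ a r (by omega)
    have hmean := abs_mul_sub_cdf_sub_le hfder hf'bd hfint hF (hy n)
      (by nlinarith [hy n] : y n ≤ y (n + 1))
    rw [show y (n + 1) - y n = (r - 1) * y n by rw [hsucc]; ring] at hmean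
    rw [deriv_avgPowerFun_quantLevels hF' ha (by linarith) hn.2.1 hn.2.2, if_neg hn.1, abs_div,
      abs_of_pos (pow_pos (hy n) 2), div_le_iff₀ (pow_pos (hy n) 2)]
    linarith
  have hlast : deriv (avgPowerFun F N y N) (y N) =
      1 / y N ^ 2 * ((r - 1) * y N * f (y N) - ∫ t in Ioi (y N), f t) := by
    rw [deriv_avgPowerFun_quantLevels hF' ha (by linarith) (by omega) le_rfl, if_pos rfl,
      one_sub_cdf hfint hfone hF (hy N).le, one_div_mul_eq_div]
  have hcard : √(((Finset.Icc 2 N).erase N).card : ℝ) ≤ √N :=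
    Real.sqrt_le_sqrt (by exact_mod_cast (Finset.card_erase_le).trans (by simp))
  calc gradNormP F N y
      ≤ √(((Finset.Icc 2 N).erase N).card : ℝ) * (μ * (r - 1) ^ 2 / 2)
          + |deriv (avgPowerFun F N y N) (y N)| :=
        Finset.sqrt_sum_sq_le (Finset.mem_Icc.mpr ⟨by omega, le_rfl⟩) (by positivity) hinterior
    _ ≤ _ := by
        rw [hlast]
        linarith [mul_le_mul_of_nonneg_right hcard (by positivity : 0 ≤ μ * (r - 1) ^ 2 / 2)]

/-- Lemma 1: gradient bound for the geometric codebook. -/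
theorem stmt2
    (f f' F : ℝ → ℝ) (μ : ℝ) (hμ : 0 < μ)
    (hfpos : ∀ x ∈ Ioi (0:ℝ), 0 < f x)
    (hfder : ∀ x ∈ Ioi (0:ℝ), HasDerivAt f (f' x) x)
    (hf'bd : ∀ x ∈ Ioi (0:ℝ), |f' x| ≤ μ)
    (hfint : IntegrableOn f (Ioi 0))
    (hfone : ∫ x in Ioi (0:ℝ), f x = 1)
    (hF : ∀ x, F x = ∫ t in Ioc (0:ℝ) x, f t)
    (hF' : ∀ x ∈ Ioi (0:ℝ), HasDerivAt F (f x) x)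
    (a r : ℝ) (ha : 0 < a) (hr : 1 < r)
    (N : ℕ) (hN : 3 ≤ N) :
    gradNormP F N (quantLevels a r) ≤
      1 / 2 * μ * Real.sqrt N * (r - 1) ^ 2 +
        |1 / (quantLevels a r N) ^ 2 *
          ((r - 1) * quantLevels a r N * f (quantLevels a r N) -
            ∫ t in Ioi (quantLevels a r N), f t)| :=
  stmt2_general f f' F μ hfder hf'bd hfint hfone hF hF' a r ha hr N hN
end

section
/- Fix a real constant c with 0 < c < ∞. For each integer n ≥ 2, let L_c(n) be the unique positive solution of L·(1+L)^{n−1} = c, and define ζ_c(n) = −log₂(L_c(n))/log₂(n), i.e., L_c(n) = n^{−ζ_c(n)}. Then lim_{n→∞} ζ_c(n) = 1. -/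
/-!
Write `L = L n`. If `n * L < 1` then `(1 + L) ^ (n - 1) ≤ e`, so `L ≥ c / e`, which is
impossible for large `n`; hence `1 ≤ n * L` eventually. Conversely
`log (c / L) = (n - 1) * log (1 + L)` and `log (1 + L) ≥ L / (1 + L)`; together with `L ≤ c`
and `c / L ≤ c * n` this gives `n * L = O(log n)`.
Then `-log L / log n = 1 - log (n * L) / log n → 1`.
-/

open Real Filter Topology

lemma one_add_pow_le_exp_one {k : ℕ} {x : ℝ} (hx : 0 ≤ x) (hkx : k * x ≤ 1) :
    (1 + x) ^ k ≤ exp 1 :=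
  calc (1 + x) ^ k ≤ exp x ^ k := by gcongr; linarith [add_one_le_exp x]
    _ = exp (k * x) := (exp_nat_mul x k).symm
    _ ≤ exp 1 := exp_le_exp.2 hkx

lemma one_le_mul_of_mul_one_add_pow_sub_one_eq {n : ℕ} {x c : ℝ} (hx : 0 < x)
    (h : x * (1 + x) ^ (n - 1) = c) (hnc : exp 1 / c ≤ n) : 1 ≤ n * x := by
  by_contra! hnx
  have hc : 0 < c := h ▸ by positivity
  have hkx : ((n - 1 : ℕ) : ℝ) * x ≤ 1 := by
    have : ((n - 1 : ℕ) : ℝ) ≤ n := Nat.cast_le.2 (Nat.sub_le n 1)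
    nlinarith
  have hcx : c ≤ x * exp 1 :=
    h ▸ mul_le_mul_of_nonneg_left (one_add_pow_le_exp_one hx.le hkx) hx.le
  rw [div_le_iff₀ hc] at hnc
  nlinarith

lemma mul_le_mul_log_of_mul_one_add_pow_eq {k : ℕ} {x c : ℝ} (hx : 0 < x)
    (h : x * (1 + x) ^ k = c) : k * x ≤ (1 + x) * log (c / x) := by
  have hlog : x ≤ (1 + x) * log (1 + x) := by
    rw [← div_le_iff₀' (by linarith)]
    calc x / (1 + x) = 1 - (1 + x)⁻¹ := by field_simp; ring
      _ ≤ log (1 + x) := one_sub_inv_le_log_of_pos (by linarith)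
  calc k * x ≤ k * ((1 + x) * log (1 + x)) := by gcongr
    _ = (1 + x) * log (c / x) := by
      rw [← h, mul_div_cancel_left₀ _ hx.ne', log_pow]; ring

lemma mul_le_four_mul_log_of_mul_one_add_pow_sub_one_eq {n : ℕ} {x c : ℝ} (hn : 2 ≤ n)
    (hx : 0 < x) (h : x * (1 + x) ^ (n - 1) = c) (hnx : 1 ≤ n * x) (hcn : c ≤ n) :
    n * x ≤ 4 * (1 + c) * log n := by
  have hn2 : (2 : ℝ) ≤ n := by exact_mod_cast hn
  have hxc : x ≤ c := h ▸ le_mul_of_one_le_right hx.le (one_le_pow₀ (by linarith))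
  have hc : 0 < c := hx.trans_le hxc
  have hcx : 1 ≤ c / x := (one_le_div hx).2 hxc
  have hlog : log (c / x) ≤ 2 * log n :=
    calc log (c / x) ≤ log (c * n) := by
          gcongr; rw [div_le_iff₀ hx, mul_assoc]; exact le_mul_of_one_le_right hc.le hnx
      _ = log c + log n := log_mul hc.ne' (by positivity)
      _ ≤ 2 * log n := by linarith [log_le_log hc hcn]
  have hkx := mul_le_mul_log_of_mul_one_add_pow_eq hx h
  rw [Nat.cast_sub (by omega), Nat.cast_one] at hkx
  have := log_nonneg hcx
  calc n * x ≤ 2 * ((n - 1) * x) := by nlinarith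
    _ ≤ 2 * ((1 + x) * log (c / x)) := by gcongr
    _ ≤ 2 * ((1 + c) * (2 * log n)) := by gcongr
    _ = 4 * (1 + c) * log n := by ring

lemma tendsto_log_const_mul_div_atTop {K : ℝ} (hK : 0 < K) :
    Tendsto (fun y => log (K * y) / y) atTop (𝓝 0) := by
  have hlog : Tendsto (fun y => log y / y) atTop (𝓝 0) := by
    simpa using tendsto_pow_log_div_mul_add_atTop 1 0 1 one_ne_zero
  have hconst : Tendsto (fun y => log K / y) atTop (𝓝 0) :=
    tendsto_const_nhds.div_atTop tendsto_id
  refine (by simpa using hconst.add hlog : Tendsto _ _ _).congr' ?_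
  filter_upwards [eventually_gt_atTop 0] with y hy
  rw [log_mul hK.ne' hy.ne', add_div]

lemma tendsto_neg_log_div_log_of_one_le_mul_le_log {x : ℕ → ℝ} {K : ℝ} (hK : 0 < K)
    (hlow : ∀ᶠ n : ℕ in atTop, 1 ≤ n * x n) (hhigh : ∀ᶠ n : ℕ in atTop, n * x n ≤ K * log n) :
    Tendsto (fun n : ℕ => -log (x n) / log n) atTop (𝓝 1) := by
  have hlogn : Tendsto (fun n : ℕ => log n) atTop atTop :=
    tendsto_log_atTop.comp tendsto_natCast_atTop_atTop
  have hbound : Tendsto (fun n : ℕ => 1 - log (K * log n) / log n) atTop (𝓝 1) := by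
    simpa using tendsto_const_nhds.sub ((tendsto_log_const_mul_div_atTop hK).comp hlogn)
  refine tendsto_of_tendsto_of_tendsto_of_le_of_le' hbound tendsto_const_nhds ?_ ?_ <;>
  filter_upwards [hlow, hhigh, eventually_gt_atTop 1] with n hlow hhigh hn
  all_goals
    have hn : 1 < (n : ℝ) := by exact_mod_cast hn
    have hlogpos : 0 < log n := log_pos hn
    have hx : 0 < x n := pos_of_mul_pos_right (a := (n : ℝ)) (by linarith) (by linarith)
    have hsplit : -log (x n) = log n - log (n * x n) := by
      rw [log_mul (by linarith) hx.ne']; ring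
    rw [hsplit, sub_div, div_self hlogpos.ne']
  · gcongr
  · have : 0 ≤ log (n * x n) / log n := div_nonneg (log_nonneg hlow) hlogpos.le
    linarith

/-- if `L c n` is the unique positive solution of
`L·(1+L)^(n-1) = c` and `ζ n = −log₂(L n)/log₂ n`, then `ζ n → 1` as `n → ∞`. -/
theorem stmt4 (c : ℝ) (hc : 0 < c) (L : ℕ → ℝ)
    (hL : ∀ n : ℕ, 2 ≤ n → 0 < L n ∧ L n * (1 + L n) ^ (n - 1) = c) :
    Tendsto (fun n : ℕ => -Real.logb 2 (L n) / Real.logb 2 n) atTop (nhds 1) := by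
  have hlogb (a b : ℝ) : -logb 2 a / logb 2 b = -log a / log b := by
    rw [logb, logb, neg_div, neg_div, div_div_div_cancel_right₀ (log_pos one_lt_two).ne']
  have hlow : ∀ᶠ n : ℕ in atTop, 1 ≤ n * L n := by
    filter_upwards [eventually_ge_atTop 2,
      tendsto_natCast_atTop_atTop.eventually_ge_atTop (exp 1 / c)] with n hn hnc
    exact one_le_mul_of_mul_one_add_pow_sub_one_eq (hL n hn).1 (hL n hn).2 hnc
  have hhigh : ∀ᶠ n : ℕ in atTop, n * L n ≤ 4 * (1 + c) * log n := by
    filter_upwards [eventually_ge_atTop 2, hlow,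
      tendsto_natCast_atTop_atTop.eventually_ge_atTop c] with n hn hnL hcn
    exact mul_le_four_mul_log_of_mul_one_add_pow_sub_one_eq hn (hL n hn).1 (hL n hn).2 hnL hcn
  simpa only [hlogb] using
    tendsto_neg_log_div_log_of_one_le_mul_le_log (by linarith) hlow hhigh
end

section
/- Let V be a real inner product space and let u, v, w ∈ V be unit vectors. Define the chordal distance between unit vectors x, y as d(x,y) = sqrt(1 − ⟨x,y⟩²). Then d satisfies the triangle inequality: d(u,w) ≤ d(u,v) + d(v,w). -/
/-!
For a unit vector `v`, `√(1 - ⟪u, v⟫²) = ‖u - ⟪u, v⟫ • v‖` is the distance from `u` to the line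
`ℝ v`. Going from `u` to the line `ℝ w` through the point `a • v`, `a = ⟪u, v⟫`, costs at most
`d(u, v) + |a| d(v, w)`, and `|a| ≤ 1`.
-/

open scoped RealInnerProductSpace

section UnitVector

variable {V : Type*} [NormedAddCommGroup V] [InnerProductSpace ℝ V]

theorem norm_sub_smul_sq_of_norm_eq_one (x : V) {v : V} (hv : ‖v‖ = 1) (μ : ℝ) :
    ‖x - μ • v‖ ^ 2 = ‖x‖ ^ 2 - ⟪x, v⟫ ^ 2 + (μ - ⟪x, v⟫) ^ 2 := by
  rw [norm_sub_sq_real, norm_smul, real_inner_smul_right, Real.norm_eq_abs, mul_pow, sq_abs, hv]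
  ring

theorem norm_sub_inner_smul_le_of_norm_eq_one (x : V) {v : V} (hv : ‖v‖ = 1) (μ : ℝ) :
    ‖x - ⟪x, v⟫ • v‖ ≤ ‖x - μ • v‖ := by
  rw [← pow_le_pow_iff_left₀ (norm_nonneg _) (norm_nonneg _) two_ne_zero,
    norm_sub_smul_sq_of_norm_eq_one x hv, norm_sub_smul_sq_of_norm_eq_one x hv, sub_self,
    zero_pow two_ne_zero, add_zero]
  exact le_add_of_nonneg_right (sq_nonneg _)

theorem sqrt_one_sub_inner_sq_eq_norm {u v : V} (hu : ‖u‖ = 1) (hv : ‖v‖ = 1) :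
    √(1 - ⟪u, v⟫ ^ 2) = ‖u - ⟪u, v⟫ • v‖ := by
  rw [← Real.sqrt_sq (norm_nonneg (u - _)), norm_sub_smul_sq_of_norm_eq_one u hv, hu]
  ring_nf

end UnitVector

/-- the chordal distance `d(x,y) = √(1 − ⟨x,y⟩²)` between unit
vectors of a real inner product space satisfies the triangle inequality. -/
theorem stmt11 {V : Type*} [NormedAddCommGroup V] [InnerProductSpace ℝ V]
    (u v w : V) (hu : ‖u‖ = 1) (hv : ‖v‖ = 1) (hw : ‖w‖ = 1) :
    Real.sqrt (1 - (inner ℝ u w : ℝ) ^ 2) ≤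
      Real.sqrt (1 - (inner ℝ u v : ℝ) ^ 2) + Real.sqrt (1 - (inner ℝ v w : ℝ) ^ 2) := by
  rw [sqrt_one_sub_inner_sq_eq_norm hu hw, sqrt_one_sub_inner_sq_eq_norm hu hv,
    sqrt_one_sub_inner_sq_eq_norm hv hw]
  set a := ⟪u, v⟫
  have ha : |a| ≤ 1 := by simpa [hu, hv] using abs_real_inner_le_norm u v
  calc ‖u - ⟪u, w⟫ • w‖ ≤ ‖u - (a * ⟪v, w⟫) • w‖ := norm_sub_inner_smul_le_of_norm_eq_one u hw _
    _ ≤ ‖u - a • v‖ + ‖a • v - (a * ⟪v, w⟫) • w‖ := norm_sub_le_norm_sub_add_norm_sub _ _ _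
    _ = ‖u - a • v‖ + |a| * ‖v - ⟪v, w⟫ • w‖ := by
      rw [mul_smul, ← smul_sub, norm_smul, Real.norm_eq_abs]
    _ ≤ ‖u - a • v‖ + ‖v - ⟪v, w⟫ • w‖ := by
      gcongr
      exact mul_le_of_le_one_left (norm_nonneg _) ha
end

section
/- (Lemma 2) Let M ≥ 2 be an integer and define λ_M = (√π·Γ((M+1)/2)/Γ(M/2))^{1/(M−1)}. Then there exists an integer N_0 (depending only on M) such that for every N ≥ N_0 and every set U of N unit vectors in ℝ^M, if δ > 0 is such that all pairwise chordal distances between distinct elements of U satisfy sqrt(1 − (uᵀv)²) ≥ δ, then δ < 4·λ_M·N^{−1/(M−1)}. -/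
/-!
The `2N` points `±uᵢ` lie on the unit sphere and, since a chord is at least the sine of the
angle it subtends, are pairwise at Euclidean distance `≥ δ`. The balls of radius `δ/2` about them
and the ball of radius `1 - δ/2` about the origin are disjoint and lie in the ball of radius
`1 + δ/2`, so comparing volumes gives
`2N (δ/2)^M ≤ (1 + δ/2)^M - (1 - δ/2)^M ≤ M δ (1 + δ/2)^(M-1)`, i.e. `N δ^(M-1) ≤ M (2 + δ)^(M-1)`.
For large `N` this forces `δ` to be small, and then `N δ^(M-1) < 4^(M-1) λ_M^(M-1)` because
`M 2^(M-1) ≤ 4^(M-1)` and `λ_M^(M-1) > 1`; the latter follows from the log-convexity of `Γ`,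
which gives `(λ_M^(M-1))² ≥ π (M-1)/2`.
-/

open Real MeasureTheory Metric Module Function Filter Topology

section Chordal

variable {E : Type*} [NormedAddCommGroup E] [InnerProductSpace ℝ E]

noncomputable def chordalDist (x y : E) : ℝ := √(1 - inner ℝ x y ^ 2)

theorem chordalDist_le_norm_sub {x y : E} (hx : ‖x‖ = 1) (hy : ‖y‖ = 1) :
    chordalDist x y ≤ ‖x - y‖ := by
  rw [chordalDist, Real.sqrt_le_left (norm_nonneg _), norm_sub_sq_real, hx, hy]
  nlinarith [sq_nonneg (1 - inner ℝ x y)]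

end Chordal

theorem one_sub_pow_add_card_mul_pow_le {E ι : Type*} [NormedAddCommGroup E] [NormedSpace ℝ E]
    [FiniteDimensional ℝ E] [Nontrivial E] [Fintype ι] {p : ι → E} (hp : ∀ i, ‖p i‖ = 1)
    {t : ℝ} (ht0 : 0 ≤ t) (ht1 : t ≤ 1) (hsep : Pairwise fun i j ↦ 2 * t ≤ dist (p i) (p j)) :
    (1 - t) ^ finrank ℝ E + Fintype.card ι * t ^ finrank ℝ E ≤ (1 + t) ^ finrank ℝ E := by
  borelize E
  set μ : Measure E := Measure.addHaar
  have hball (x : E) {r : ℝ} (hr : 0 ≤ r) :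
      μ.real (ball x r) = r ^ finrank ℝ E * μ.real (ball 0 1) := by
    rw [measureReal_def, measureReal_def, μ.addHaar_ball x hr, ENNReal.toReal_mul,
      ENNReal.toReal_ofReal (by positivity)]
  have hdisj : Pairwise (Disjoint on fun i ↦ ball (p i) t) := fun i j hij ↦
    ball_disjoint_ball (by linarith [hsep hij])
  have hdisj₀ : Disjoint (ball 0 (1 - t)) (⋃ i, ball (p i) t) :=
    Set.disjoint_iUnion_right.2 fun i ↦ ball_disjoint_ball (by simp [hp])
  have hsub : ball 0 (1 - t) ∪ ⋃ i, ball (p i) t ⊆ ball 0 (1 + t) :=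
    Set.union_subset (ball_subset_ball (by linarith))
      (Set.iUnion_subset fun i ↦ ball_subset_ball' (by simp [hp]; linarith))
  have hfin : μ (⋃ i, ball (p i) t) ≠ ⊤ :=
    (measure_mono (Set.subset_union_right.trans hsub)).trans_lt measure_ball_lt_top |>.ne
  have hvol : μ.real (ball 0 (1 - t)) + ∑ i, μ.real (ball (p i) t) ≤ μ.real (ball 0 (1 + t)) := by
    rw [← measureReal_iUnion_fintype hdisj fun _ ↦ measurableSet_ball,
      ← measureReal_union hdisj₀ (MeasurableSet.iUnion fun _ ↦ measurableSet_ball)]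
    exact measureReal_mono hsub
  simp only [hball _ ht0, hball 0 (by linarith : 0 ≤ 1 - t), hball 0 (by linarith : 0 ≤ 1 + t),
    Finset.sum_const, Finset.card_univ, nsmul_eq_mul, ← mul_assoc, ← add_mul] at hvol
  have hV : 0 < μ.real (ball (0 : E) 1) :=
    ENNReal.toReal_pos (measure_ball_pos μ 0 one_pos).ne' measure_ball_lt_top.ne
  exact le_of_mul_le_mul_right hvol hV

section Antipodal

variable {E ι : Type*} [NormedAddCommGroup E]

def antipodalFamily (u : ι → E) (k : ι × Bool) : E := if k.2 then u k.1 else -u k.1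

@[simp]
theorem norm_antipodalFamily (u : ι → E) (k : ι × Bool) : ‖antipodalFamily u k‖ = ‖u k.1‖ := by
  unfold antipodalFamily; split_ifs <;> simp

@[simp]
theorem chordalDist_antipodalFamily [InnerProductSpace ℝ E] (u : ι → E) (k l : ι × Bool) :
    chordalDist (antipodalFamily u k) (antipodalFamily u l) = chordalDist (u k.1) (u l.1) := by
  unfold chordalDist antipodalFamily; split_ifs <;> simp

theorem antipodalFamily_not (u : ι → E) (i : ι) (b : Bool) :
    antipodalFamily u (i, !b) = -antipodalFamily u (i, b) := by
  cases b <;> simp [antipodalFamily]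

variable [InnerProductSpace ℝ E]

theorem pairwise_le_dist_antipodalFamily {u : ι → E} (hu : ∀ i, ‖u i‖ = 1) {δ : ℝ} (hδ : δ ≤ 2)
    (hsep : Pairwise fun i j ↦ δ ≤ chordalDist (u i) (u j)) :
    Pairwise fun k l ↦ δ ≤ dist (antipodalFamily u k) (antipodalFamily u l) := by
  rintro ⟨i, b⟩ ⟨j, c⟩ hkl
  by_cases hij : i = j
  · obtain rfl := hij
    obtain rfl : c = !b := by revert hkl; cases b <;> cases c <;> simp
    rw [antipodalFamily_not, dist_eq_norm, sub_neg_eq_add, ← two_smul ℝ, norm_smul]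
    simpa [hu] using hδ
  · calc δ ≤ chordalDist (u i) (u j) := hsep hij
      _ = chordalDist (antipodalFamily u (i, b)) (antipodalFamily u (j, c)) := by simp
      _ ≤ dist (antipodalFamily u (i, b)) (antipodalFamily u (j, c)) := by
        rw [dist_eq_norm]; exact chordalDist_le_norm_sub (by simp [hu]) (by simp [hu])

theorem card_mul_pow_le_of_pairwise_le_chordalDist [Fintype ι] {m : ℕ} (hE : finrank ℝ E = m + 1)
    {u : ι → E} (hu : ∀ i, ‖u i‖ = 1) {δ : ℝ} (hδ0 : 0 < δ) (hδ2 : δ ≤ 2)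
    (hsep : Pairwise fun i j ↦ δ ≤ chordalDist (u i) (u j)) :
    Fintype.card ι * δ ^ m ≤ (m + 1) * (2 + δ) ^ m := by
  have : FiniteDimensional ℝ E := Module.finite_of_finrank_eq_succ hE
  have : Nontrivial E := Module.nontrivial_of_finrank_eq_succ hE
  obtain ⟨t, rfl⟩ : ∃ t, δ = 2 * t := ⟨δ / 2, by ring⟩
  have hpack := one_sub_pow_add_card_mul_pow_le (p := antipodalFamily u) (by simp [hu])
    (by linarith) (by linarith) (pairwise_le_dist_antipodalFamily hu hδ2 hsep)
  rw [hE, Fintype.card_prod, Fintype.card_bool] at hpack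
  have hmax : max |1 + t| |1 - t| = 1 + t := by
    rw [abs_of_nonneg (by linarith), abs_of_nonneg (by linarith)]; exact max_eq_left (by linarith)
  have hdiff := (le_abs_self _).trans (abs_pow_sub_pow_le (1 + t) (1 - t) (m + 1))
  rw [hmax, show 1 + t - (1 - t) = 2 * t by ring, abs_of_pos (by linarith)] at hdiff
  have key : 2 * t * (Fintype.card ι * t ^ m) ≤ 2 * t * ((m + 1) * (1 + t) ^ m) := by
    push_cast at hpack hdiff
    linear_combination hpack + hdiff
  calc (Fintype.card ι : ℝ) * (2 * t) ^ m = 2 ^ m * (Fintype.card ι * t ^ m) := by ring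
    _ ≤ 2 ^ m * ((m + 1) * (1 + t) ^ m) :=
        mul_le_mul_of_nonneg_left (le_of_mul_le_mul_left key (by linarith)) (by positivity)
    _ = (m + 1) * (2 + 2 * t) ^ m := by rw [show 2 + 2 * t = 2 * (1 + t) by ring, mul_pow]; ring

end Antipodal

theorem Real.mul_Gamma_add_half_sq_le {s : ℝ} (hs : 0 < s) :
    s * Gamma (s + 1 / 2) ^ 2 ≤ Gamma (s + 1) ^ 2 := by
  have h := Gamma_mul_add_mul_le_rpow_Gamma_mul_rpow_Gamma hs (by linarith : 0 < s + 1)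
    (by norm_num : (0 : ℝ) < 1 / 2) (by norm_num : (0 : ℝ) < 1 / 2) (by norm_num)
  have hΓ₀ := Gamma_pos_of_pos hs
  have hΓ₁ := Gamma_pos_of_pos (by linarith : 0 < s + 1)
  have hΓ₂ := Gamma_pos_of_pos (by linarith : 0 < s + 1 / 2)
  rw [show 1 / 2 * s + 1 / 2 * (s + 1) = s + 1 / 2 by ring, ← mul_rpow hΓ₀.le hΓ₁.le,
    ← sqrt_eq_rpow, Real.le_sqrt hΓ₂.le (by positivity)] at h
  calc s * Gamma (s + 1 / 2) ^ 2 ≤ s * (Gamma s * Gamma (s + 1)) := by gcongr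
    _ = Gamma (s + 1) ^ 2 := by rw [Gamma_add_one hs.ne']; ring

theorem one_lt_sqrt_pi_mul_Gamma_div_Gamma {M : ℕ} (hM : 2 ≤ M) :
    1 < √π * Gamma (((M : ℝ) + 1) / 2) / Gamma ((M : ℝ) / 2) := by
  set s : ℝ := ((M : ℝ) - 1) / 2
  have hs : 1 / 2 ≤ s := by
    have : (2 : ℝ) ≤ M := by exact_mod_cast hM
    simp only [s]; linarith
  rw [show ((M : ℝ) + 1) / 2 = s + 1 by ring, show (M : ℝ) / 2 = s + 1 / 2 by ring]
  have hΓ : 0 < Gamma (s + 1 / 2) := Gamma_pos_of_pos (by linarith)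
  refine (one_lt_sq_iff₀ (by positivity [Gamma_pos_of_pos (by linarith : 0 < s + 1)])).1 ?_
  rw [div_pow, mul_pow, sq_sqrt pi_pos.le, one_lt_div (by positivity)]
  calc Gamma (s + 1 / 2) ^ 2 < π * (s * Gamma (s + 1 / 2) ^ 2) := by
        have : 1 < π * s := by nlinarith [pi_gt_three]
        nlinarith [sq_pos_of_pos hΓ]
    _ ≤ π * Gamma (s + 1) ^ 2 := by gcongr; exact mul_Gamma_add_half_sq_le (by linarith)

theorem exists_forall_mul_pow_lt {m : ℕ} {A C : ℝ} (hA : 0 ≤ A) (hAC : A * 2 ^ m < C) :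
    ∃ N₀ : ℕ, ∀ N : ℕ, N₀ ≤ N → ∀ δ : ℝ, 0 < δ → δ ≤ 2 →
      N * δ ^ m ≤ A * (2 + δ) ^ m → N * δ ^ m < C := by
  have hcont : Tendsto (fun δ : ℝ ↦ A * (2 + δ) ^ m) (𝓝 0) (𝓝 (A * 2 ^ m)) := by
    simpa using ((continuous_const.add continuous_id).pow m).const_mul A |>.tendsto 0
  obtain ⟨ε, hε, hεC⟩ := Metric.eventually_nhds_iff.1 (hcont.eventually (gt_mem_nhds hAC))
  obtain ⟨N₀, hN₀⟩ := exists_nat_gt (A * 4 ^ m / ε ^ m)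
  refine ⟨N₀, fun N hN δ hδ0 hδ2 hNδ ↦ hNδ.trans_lt (hεC ?_)⟩
  rw [Real.dist_0_eq_abs, abs_of_pos hδ0]
  by_contra! hεδ
  have hN : A * 4 ^ m < N * ε ^ m := by
    rw [← div_lt_iff₀ (by positivity)]; exact hN₀.trans_le (by exact_mod_cast hN)
  have : N * ε ^ m ≤ A * 4 ^ m := calc
    N * ε ^ m ≤ N * δ ^ m := by gcongr
    _ ≤ A * (2 + δ) ^ m := hNδ
    _ ≤ A * 4 ^ m := by gcongr; linarith
  linarith

theorem lt_mul_rpow_of_mul_pow_lt {m : ℕ} (hm : m ≠ 0) {c S N δ : ℝ} (hc : 0 ≤ c) (hS : 0 ≤ S)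
    (hN : 0 < N) (h : N * δ ^ m < c ^ m * S) :
    δ < c * S ^ (1 / (m : ℝ)) * N ^ (-1 / (m : ℝ)) := by
  have hm' : (m : ℝ) ≠ 0 := Nat.cast_ne_zero.2 hm
  have hpow : (c * S ^ (1 / (m : ℝ)) * N ^ (-1 / (m : ℝ))) ^ m = c ^ m * S / N := by
    rw [mul_pow, mul_pow, ← rpow_natCast (S ^ _), ← rpow_natCast (N ^ _), ← rpow_mul hS,
      ← rpow_mul hN.le, div_mul_cancel₀ _ hm', div_mul_cancel₀ _ hm', rpow_one, rpow_neg_one,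
      div_eq_mul_inv]
  refine lt_of_pow_lt_pow_left₀ m (by positivity) ?_
  rwa [hpow, lt_div_iff₀ hN, mul_comm]

/-- Lemma 2: Hamming-type bound for real Grassmannian codebooks.
For all large enough `N`, any `N` unit vectors in `ℝ^M` whose pairwise chordal
distances are all at least `δ > 0` satisfy `δ < 4·λ_M·N^{−1/(M−1)}`, with
`λ_M = (√π·Γ((M+1)/2)/Γ(M/2))^{1/(M−1)}`. -/
theorem stmt14 (M : ℕ) (hM : 2 ≤ M) :
    ∃ N₀ : ℕ, ∀ N : ℕ, N₀ ≤ N →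
      ∀ u : Fin N → EuclideanSpace ℝ (Fin M), (∀ i, ‖u i‖ = 1) →
        ∀ δ : ℝ, 0 < δ →
          (∀ i j : Fin N, i ≠ j →
            δ ≤ Real.sqrt (1 - (inner ℝ (u i) (u j) : ℝ) ^ 2)) →
          δ < 4 * (Real.sqrt Real.pi * Real.Gamma (((M : ℝ) + 1) / 2) /
                Real.Gamma ((M : ℝ) / 2)) ^ ((1 : ℝ) / ((M : ℝ) - 1)) *
              (N : ℝ) ^ (-(1 : ℝ) / ((M : ℝ) - 1)) := by
  have hS := one_lt_sqrt_pi_mul_Gamma_div_Gamma hM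
  obtain ⟨m, rfl⟩ : ∃ m, M = m + 1 := ⟨M - 1, by omega⟩
  have hm : ((m + 1 : ℕ) : ℝ) - 1 = m := by push_cast; ring
  have h2m : ((m + 1 : ℕ) : ℝ) ≤ 2 ^ m := by exact_mod_cast Nat.lt_two_pow_self
  obtain ⟨N₀, hN₀⟩ := exists_forall_mul_pow_lt (Nat.cast_nonneg (m + 1)) <|
    calc ((m + 1 : ℕ) : ℝ) * 2 ^ m ≤ 4 ^ m := by
          rw [show (4 : ℝ) = 2 * 2 by norm_num, mul_pow]; gcongr
      _ < 4 ^ m * _ := lt_mul_of_one_lt_right (by positivity) hS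
  refine ⟨max 2 N₀, fun N hN u hu δ hδ hsep ↦ ?_⟩
  have hN2 : 2 ≤ N := le_of_max_le_left hN
  have hδ1 : δ ≤ 1 := (hsep ⟨0, by omega⟩ ⟨1, by omega⟩ (by simp [Fin.ext_iff])).trans
    (sqrt_le_one.2 (sub_le_self _ (sq_nonneg _)))
  have hcard := card_mul_pow_le_of_pairwise_le_chordalDist (finrank_euclideanSpace_fin (𝕜 := ℝ))
    hu hδ (by linarith) fun i j ↦ hsep i j
  rw [Fintype.card_fin] at hcard
  rw [hm]
  refine lt_mul_rpow_of_mul_pow_lt (by omega) (by norm_num) (by positivity)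
    (by positivity) (hN₀ N (le_of_max_le_right hN) δ hδ (by linarith) ?_)
  exact_mod_cast hcard
end

section
/- (Theorem 3) Let M ≥ 2 be an integer, define λ_M = (√π·Γ((M+1)/2)/Γ(M/2))^{1/(M−1)}, and let B ∈ ℝ. Consider the function g : ℝ → ℝ given by g(x) = 2^{−x} + 16·λ_M²·2^{−2(B−x)/(M−1)}, i.e., the relaxed objective Ṅ^{−1} + 16λ_M²·N̈^{−2/(M−1)} with Ṅ = 2^x and N̈ = 2^{B−x}. Then g has a unique global minimizer on ℝ, attained at x* = 2B/(M+1) − κ, where κ = ((M−1)/(M+1))·log₂(32·λ_M²/(M−1)). Equivalently, the optimal number of magnitude quantization bits is Ḃ = 2B/(M+1) − κ and the optimal number of direction quantization bits is B̈ = B − Ḃ = ((M−1)/(M+1))·B + κ. -/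
/-!
Writing `2^y = exp (y log 2)`, the objective is `a e^{-p x} + b e^{q x}` with `a, b, p, q > 0`,
and the definition of `κ` makes `x*` its critical point. Around a critical point `x₀` the objective factors as
`(A / q) (q e^{-p y} + p e^{q y})` with `y = x - x₀`, and `e^z > 1 + z` bounds the bracket
strictly below by its value `p + q` at `y = 0`.
-/

open Real

lemma add_lt_mul_exp_add_mul_exp {p q y : ℝ} (hp : 0 < p) (hq : 0 < q) (hy : y ≠ 0) :
    p + q < q * exp (-(p * y)) + p * exp (q * y) := by
  have h₁ : -(p * y) + 1 < exp (-(p * y)) := add_one_lt_exp (by simp [hp.ne', hy])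
  have h₂ : q * y + 1 < exp (q * y) := add_one_lt_exp (by simp [hq.ne', hy])
  nlinarith [mul_lt_mul_of_pos_left h₁ hq, mul_lt_mul_of_pos_left h₂ hp]

/-- The balance condition `hcrit` says that the derivative vanishes at `x₀`. -/
lemma mul_exp_add_mul_exp_lt_of_crit {a b p q x₀ x : ℝ} (ha : 0 < a) (hp : 0 < p) (hq : 0 < q)
    (hcrit : q * (b * exp (q * x₀)) = p * (a * exp (-(p * x₀)))) (hx : x ≠ x₀) :
    a * exp (-(p * x₀)) + b * exp (q * x₀) < a * exp (-(p * x)) + b * exp (q * x) := by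
  set A := a * exp (-(p * x₀))
  have hA : 0 < A := by positivity
  have hB : b * exp (q * x₀) = p / q * A := by
    field_simp
    linarith
  have hsplit : a * exp (-(p * x)) + b * exp (q * x)
      = A / q * (q * exp (-(p * (x - x₀))) + p * exp (q * (x - x₀))) := by
    have e₁ : exp (-(p * x)) = exp (-(p * x₀)) * exp (-(p * (x - x₀))) := by
      rw [← exp_add]; ring_nf
    have e₂ : exp (q * x) = exp (q * x₀) * exp (q * (x - x₀)) := by
      rw [← exp_add]; ring_nf
    rw [e₁, e₂, ← mul_assoc, ← mul_assoc, hB]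
    field_simp
    ring
  have hbound := add_lt_mul_exp_add_mul_exp hp hq (sub_ne_zero.mpr hx)
  rw [hsplit, hB]
  calc A + p / q * A = A / q * (p + q) := by field_simp; ring
    _ < _ := mul_lt_mul_of_pos_left hbound (by positivity)

lemma two_rpow_eq_exp (y : ℝ) : (2 : ℝ) ^ y = exp (log 2 * y) :=
  rpow_def_of_pos two_pos y

lemma sqrt_pi_mul_Gamma_div_Gamma_rpow_pos {s : ℝ} (hs : 0 < s) (r : ℝ) :
    0 < (√π * Gamma ((s + 1) / 2) / Gamma (s / 2)) ^ r := by
  have : 0 < Gamma ((s + 1) / 2) := Gamma_pos_of_pos (by positivity)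
  have : 0 < Gamma (s / 2) := Gamma_pos_of_pos (by positivity)
  positivity

/-- Theorem 3: the relaxed excess-power objective
`g(x) = 2^{−x} + 16·λ_M²·2^{−2(B−x)/(M−1)}` has a unique global minimizer,
attained at `x* = 2B/(M+1) − κ` with
`κ = ((M−1)/(M+1))·log₂(32·λ_M²/(M−1))`. -/
theorem stmt16 (M : ℕ) (hM : 2 ≤ M) (B : ℝ)
    (lam : ℝ)
    (hlam : lam = (Real.sqrt Real.pi * Real.Gamma (((M : ℝ) + 1) / 2) /
        Real.Gamma ((M : ℝ) / 2)) ^ ((1 : ℝ) / ((M : ℝ) - 1)))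
    (κ : ℝ)
    (hκ : κ = (((M : ℝ) - 1) / ((M : ℝ) + 1)) *
        Real.logb 2 (32 * lam ^ 2 / ((M : ℝ) - 1)))
    (g : ℝ → ℝ)
    (hg : ∀ x : ℝ, g x = (2 : ℝ) ^ (-x) +
        16 * lam ^ 2 * (2 : ℝ) ^ (-2 * (B - x) / ((M : ℝ) - 1))) :
    ∀ x : ℝ, x ≠ 2 * B / ((M : ℝ) + 1) - κ →
      g (2 * B / ((M : ℝ) + 1) - κ) < g x := by
  have hm : (0 : ℝ) < M - 1 := by
    have : (2 : ℝ) ≤ M := by exact_mod_cast hM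
    linarith
  have hlam_pos : 0 < lam := hlam ▸ sqrt_pi_mul_Gamma_div_Gamma_rpow_pos (by positivity) _
  have hlog2 : 0 < log 2 := log_pos one_lt_two
  set b := 16 * lam ^ 2 * exp (-(2 * log 2 * B / (M - 1)))
  have hg_exp : ∀ x, g x = 1 * exp (-(log 2 * x)) + b * exp (2 * log 2 / (M - 1) * x) := by
    intro x
    have hexp : log 2 * (-2 * (B - x) / (M - 1))
        = -(2 * log 2 * B / (M - 1)) + 2 * log 2 / (M - 1) * x := by
      ring
    rw [hg, two_rpow_eq_exp, two_rpow_eq_exp, hexp, exp_add, mul_neg]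
    ring
  have hlogb : exp (log 2 * logb 2 (32 * lam ^ 2 / (M - 1))) = 32 * lam ^ 2 / (M - 1) := by
    rw [← two_rpow_eq_exp, rpow_logb two_pos (by norm_num) (by positivity)]
  intro x hx
  rw [hg_exp, hg_exp]
  refine mul_exp_add_mul_exp_lt_of_crit one_pos hlog2 (by positivity) ?_ hx
  have hcoef : 2 * log 2 / (M - 1) * b
      = log 2 * (32 * lam ^ 2 / (M - 1)) * exp (-(2 * log 2 * B / (M - 1))) := by
    ring
  rw [← mul_assoc, hcoef, ← hlogb, mul_assoc, mul_assoc, ← exp_add, ← exp_add, one_mul]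
  congr 2
  rw [hκ]
  field_simp
  ring
end
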